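/- arXiv:2603.14960 — 2 statements merged into one kernel-verified Lean document; each statement's English description precedes it below -/
import Mathlib

section
/- Let (Q, μ) be a finite measure space, let b₃ > 0, let a, b, ū : Q → ℝ be measurable and essentially bounded with a ≤ ū ≤ b μ-a.e., and let g : Q → ℝ be integrable. Assume the variational inequality ∫_Q (g + b₃ ū)(u − ū) dμ ≥ 0 holds for every measurable essentially bounded u : Q → ℝ with a ≤ u ≤ b μ-a.e. Then ū(x) = max{a(x), min{b(x), −g(x)/b₃}} for μ-a.e. x ∈ Q. -/
open MeasureTheory

/-! Let `p = max a (min b (-g / b₃))` be the pointwise projection of `-g / b₃` onto `[a, b]`.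
It is an admissible control, and the obtuse-angle property of the projection onto an interval
gives `(g + b₃ ū)(p - ū) ≤ -b₃ (ū - p)² ≤ 0` pointwise. Testing the variational inequality with
`u = p` therefore forces the integrand, and with it `(ū - p)²`, to vanish a.e. -/

theorem sub_clamp_mul_sub_clamp_nonpos {a b u : ℝ} (t : ℝ) (hau : a ≤ u) (hub : u ≤ b) :
    (t - max a (min b t)) * (u - max a (min b t)) ≤ 0 := by
  rcases le_total t a with hta | hat
  · rw [max_eq_left ((min_le_right _ _).trans hta)]
    exact mul_nonpos_of_nonpos_of_nonneg (by linarith) (by linarith)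
  rcases le_total t b with htb | hbt
  · rw [min_eq_right htb, max_eq_right hat, sub_self, zero_mul]
  · rw [min_eq_left hbt, max_eq_right (hau.trans hub)]
    exact mul_nonpos_of_nonneg_of_nonpos (by linarith) (by linarith)

theorem mul_clamp_sub_le_neg_mul_sq {a b u c : ℝ} (g : ℝ) (hc : 0 < c) (hau : a ≤ u)
    (hub : u ≤ b) :
    (g + c * u) * (max a (min b (-g / c)) - u) ≤ -c * (u - max a (min b (-g / c))) ^ 2 := by
  set t := -g / c
  set p := max a (min b t)
  have hg : g = -c * t := by simp only [t]; field_simp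
  have hobtuse := sub_clamp_mul_sub_clamp_nonpos t hau hub
  have hsplit : (g + c * u) * (p - u) = -c * (u - p) ^ 2 + c * ((t - p) * (u - p)) := by
    rw [hg]; ring
  rw [hsplit]
  linarith [mul_nonpos_of_nonneg_of_nonpos hc.le hobtuse]

section

variable {α : Type*} [MeasurableSpace α] {μ : Measure α}

theorem memLp_of_le_of_le {p : ENNReal} {f g₁ g₂ : α → ℝ} (hf : AEStronglyMeasurable f μ)
    (h_le₁ : g₁ ≤ᵐ[μ] f) (h_le₂ : f ≤ᵐ[μ] g₂) (h₁ : MemLp g₁ p μ) (h₂ : MemLp g₂ p μ) :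
    MemLp f p μ := by
  refine (h₁.norm.add h₂.norm).of_le hf ?_
  filter_upwards [h_le₁, h_le₂] with x hx₁ hx₂
  simp only [Pi.add_apply, Real.norm_eq_abs]
  have hsum_nonneg : 0 ≤ |g₁ x| + |g₂ x| := by positivity
  rw [abs_of_nonneg hsum_nonneg]
  exact (abs_le_max_abs_abs hx₁ hx₂).trans (max_le_add_of_nonneg (abs_nonneg _) (abs_nonneg _))

theorem ae_eq_zero_of_nonpos_of_integral_nonneg {f : α → ℝ} (hf : f ≤ᵐ[μ] 0)
    (hfi : Integrable f μ) (h : 0 ≤ ∫ x, f x ∂μ) : f =ᵐ[μ] 0 := by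
  have hneg : 0 ≤ᵐ[μ] -f := hf.mono fun x hx => neg_nonneg.mpr hx
  have hint : ∫ x, -f x ∂μ = 0 := by
    rw [integral_neg]; linarith [integral_nonpos_of_ae hf]
  filter_upwards [(integral_eq_zero_iff_of_nonneg_ae hneg hfi.neg).mp hint] with x hx
  simpa using hx

end

theorem stmt1_general {Q : Type*} [MeasurableSpace Q] (μ : Measure Q) [IsFiniteMeasure μ]
    (b₃ : ℝ) (hb₃ : 0 < b₃)
    (a b ubar : Q → ℝ)
    (ha : Measurable a) (hb : Measurable b)
    (ha' : MemLp a ⊤ μ) (hb' : MemLp b ⊤ μ) (hubar' : MemLp ubar ⊤ μ)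
    (hbound : ∀ᵐ x ∂μ, a x ≤ ubar x ∧ ubar x ≤ b x)
    (g : Q → ℝ) (hg : Integrable g μ)
    (hvi : ∀ u : Q → ℝ, Measurable u → MemLp u ⊤ μ →
      (∀ᵐ x ∂μ, a x ≤ u x ∧ u x ≤ b x) →
      0 ≤ ∫ x, (g x + b₃ * ubar x) * (u x - ubar x) ∂μ) :
    ∀ᵐ x ∂μ, ubar x = max (a x) (min (b x) (-(g x) / b₃)) := by
  -- `g` is only a.e. strongly measurable; the test control is built from a measurable version.
  set g' := hg.1.mk g
  have hgg' : g =ᵐ[μ] g' := hg.1.ae_eq_mk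
  set p : Q → ℝ := fun x => max (a x) (min (b x) (-g' x / b₃))
  have hp_meas : Measurable p :=
    ha.max (hb.min (hg.1.stronglyMeasurable_mk.measurable.neg.div_const b₃))
  have hp_adm : ∀ᵐ x ∂μ, a x ≤ p x ∧ p x ≤ b x := by
    filter_upwards [hbound] with x hx
    exact ⟨le_max_left _ _, max_le (hx.1.trans hx.2) (min_le_left _ _)⟩
  have hp_mem : MemLp p ⊤ μ := memLp_of_le_of_le hp_meas.aestronglyMeasurable
    (hp_adm.mono fun _ hx => hx.1) (hp_adm.mono fun _ hx => hx.2) ha' hb'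
  have hF_int : Integrable (fun x => (g x + b₃ * ubar x) * (p x - ubar x)) μ :=
    (hg.add ((hubar'.integrable le_top).const_mul b₃)).mul_of_top_left (hp_mem.sub hubar')
  have hF_le : ∀ᵐ x ∂μ, (g x + b₃ * ubar x) * (p x - ubar x) ≤ -b₃ * (ubar x - p x) ^ 2 := by
    filter_upwards [hbound, hgg'] with x hx hgx
    rw [hgx]
    exact mul_clamp_sub_le_neg_mul_sq (g' x) hb₃ hx.1 hx.2
  have hF_nonpos : (fun x => (g x + b₃ * ubar x) * (p x - ubar x)) ≤ᵐ[μ] 0 :=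
    hF_le.mono fun _ hx =>
      hx.trans (mul_nonpos_of_nonpos_of_nonneg (neg_nonpos.mpr hb₃.le) (sq_nonneg _))
  have hF_zero := ae_eq_zero_of_nonpos_of_integral_nonneg hF_nonpos hF_int
    (hvi p hp_meas hp_mem hp_adm)
  filter_upwards [hF_le, hF_zero, hgg'] with x hle hzero hgx
  have hsq : (ubar x - p x) ^ 2 = 0 := by
    simp only [Pi.zero_apply] at hzero
    nlinarith [sq_nonneg (ubar x - p x)]
  rw [hgx]
  exact sub_eq_zero.mp (pow_eq_zero_iff two_ne_zero |>.mp hsq)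

/-- From the variational inequality `∫ (g + b₃ ubar)(u - ubar) ≥ 0` over all admissible
controls `u` with `a ≤ u ≤ b` a.e., one deduces the pointwise projection formula
`ubar = max (a, min (b, -g/b₃))` a.e. -/
theorem stmt1 {Q : Type*} [MeasurableSpace Q] (μ : Measure Q) [IsFiniteMeasure μ]
    (b₃ : ℝ) (hb₃ : 0 < b₃)
    (a b ubar : Q → ℝ)
    (ha : Measurable a) (hb : Measurable b) (hubar : Measurable ubar)
    (ha' : MemLp a ⊤ μ) (hb' : MemLp b ⊤ μ) (hubar' : MemLp ubar ⊤ μ)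
    (hbound : ∀ᵐ x ∂μ, a x ≤ ubar x ∧ ubar x ≤ b x)
    (g : Q → ℝ) (hg : Integrable g μ)
    (hvi : ∀ u : Q → ℝ, Measurable u → MemLp u ⊤ μ →
      (∀ᵐ x ∂μ, a x ≤ u x ∧ u x ≤ b x) →
      0 ≤ ∫ x, (g x + b₃ * ubar x) * (u x - ubar x) ∂μ) :
    ∀ᵐ x ∂μ, ubar x = max (a x) (min (b x) (-(g x) / b₃)) :=
  stmt1_general μ b₃ hb₃ a b ubar ha hb ha' hb' hubar' hbound g hg hvi
end

section
/- Let a < 0 < b, b₃ > 0, κ ≥ 0 be real numbers, and let d, λ, ū be real numbers such that |λ| ≤ 1, λ = 1 if ū > 0, λ = −1 if ū < 0, and ū = max{a, min{b, −(d + κλ)/b₃}}. Then ū = 0 if and only if |d| ≤ κ. -/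
/-- Pointwise core of the full-sparsity result: combining the projection formula for a
locally optimal control with the characterization of the subdifferential of the absolute
value, the control vanishes exactly when the adjoint quantity `d` satisfies `|d| ≤ κ`. -/
theorem stmt4 (a b b₃ κ d lam ubar : ℝ) (ha : a < 0) (hb : 0 < b) (hb₃ : 0 < b₃)
    (hκ : 0 ≤ κ) (hlam : |lam| ≤ 1)
    (hlam1 : 0 < ubar → lam = 1) (hlam2 : ubar < 0 → lam = -1)
    (hproj : ubar = max a (min b (-(d + κ * lam) / b₃))) :
    ubar = 0 ↔ |d| ≤ κ := by
  constructor
  · intro h0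
    rw [h0] at hproj
    -- max a (min b x) = 0 with a < 0 forces min b x = 0, hence x = 0
    have hmin : min b (-(d + κ * lam) / b₃) = 0 := by
      rcases max_cases a (min b (-(d + κ * lam) / b₃)) with ⟨he, _⟩ | ⟨he, _⟩
      · linarith [hproj.trans he]
      · linarith [hproj.trans he]
    have hx : -(d + κ * lam) / b₃ = 0 := by
      rcases min_cases b (-(d + κ * lam) / b₃) with ⟨he, _⟩ | ⟨he, _⟩
      · linarith
      · linarith
    have : d + κ * lam = 0 := by
      field_simp at hx; linarith
    have hd : d = -(κ * lam) := by linarith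
    rw [hd, abs_neg, abs_mul, abs_of_nonneg hκ]
    calc κ * |lam| ≤ κ * 1 := by nlinarith
      _ = κ := by ring
  · intro hd
    rw [abs_le] at hd
    by_contra hne
    rcases lt_trichotomy ubar 0 with hu | hu | hu
    · have hl := hlam2 hu
      rw [hl] at hproj
      have h1 : 0 ≤ -(d + κ * (-1)) / b₃ := by
        apply div_nonneg _ hb₃.le; linarith
      have : (0:ℝ) ≤ min b (-(d + κ * (-1)) / b₃) := le_min hb.le h1
      have : (0:ℝ) ≤ ubar := hproj ▸ le_max_of_le_right this
      linarith
    · exact hne hu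
    · have hl := hlam1 hu
      rw [hl] at hproj
      have h1 : -(d + κ * 1) / b₃ ≤ 0 := by
        apply div_nonpos_of_nonpos_of_nonneg _ hb₃.le; linarith
      have : min b (-(d + κ * 1) / b₃) ≤ 0 := min_le_of_right_le h1
      have : ubar ≤ 0 := hproj ▸ max_le ha.le this
      linarith
end
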